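/- arXiv:2311.02483 — 10 statements merged into one kernel-verified Lean document; each statement's English description precedes it below -/
import Mathlib

section
/- In an involutive BE algebra, for all x, y, z: (x → y)* → z = x → (y* → z). -/
class InvBEAlgebra (X : Type*) extends One X, Zero X where
  imp : X → X → X
  imp_self : ∀ x : X, imp x x = 1
  imp_one : ∀ x : X, imp x 1 = 1
  one_imp : ∀ x : X, imp 1 x = x
  exchange : ∀ x y z : X, imp x (imp y z) = imp y (imp x z)
  zero_imp : ∀ x : X, imp 0 x = 1
  involutive : ∀ x : X, imp (imp x 0) 0 = x

namespace InvBEAlgebra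

variable {X : Type*} [InvBEAlgebra X]

def star (x : X) : X := imp x 0

def inf (x y : X) : X := star (imp (imp (star x) (star y)) (star y))

def sup (x y : X) : X := imp (imp x y) y

def odot (x y : X) : X := star (imp x (star y))

def leQ (x y : X) : Prop := x = inf x y

end InvBEAlgebra

class QWAlgebra (X : Type*) extends InvBEAlgebra X where
  qw : ∀ x y z : X, imp x (InvBEAlgebra.inf (InvBEAlgebra.inf x y) (InvBEAlgebra.inf z x)) =
        InvBEAlgebra.inf (imp x y) (imp x z)

open InvBEAlgebra

theorem stmt0 {X : Type*} [InvBEAlgebra X] (x y z : X) :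
    imp (star (imp x y)) z = imp x (imp (star y) z) := by
  simp only [InvBEAlgebra.star]
  calc imp (imp (imp x y) 0) z
      = imp (imp (imp x y) 0) (imp (imp z 0) 0) := by rw [involutive]
    _ = imp (imp z 0) (imp (imp (imp x y) 0) 0) := by rw [exchange]
    _ = imp (imp z 0) (imp x y) := by rw [involutive]
    _ = imp x (imp (imp z 0) y) := by rw [exchange]
    _ = imp x (imp (imp z 0) (imp (imp y 0) 0)) := by rw [involutive]
    _ = imp x (imp (imp y 0) (imp (imp z 0) 0)) := by rw [exchange (imp z 0)]
    _ = imp x (imp (imp y 0) z) := by rw [involutive]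
end

section
/- In an involutive BE algebra, for all x, y, z: x → (y → z) = (x → y*)* → z. -/
open InvBEAlgebra

theorem stmt1 {X : Type*} [InvBEAlgebra X] (x y z : X) :
    imp x (imp y z) = imp (star (imp x (star y))) z := by
  unfold InvBEAlgebra.star
  conv_lhs => rw [← involutive z]
  conv_rhs => rw [← involutive z]
  rw [exchange y, exchange x, exchange (imp (imp x (imp y 0)) 0), involutive]
end

section
/- In an involutive BE algebra, for all x, y: (x* → y)* → (x* → y) = (x* → x)* → (y* → y). -/
open InvBEAlgebra

lemma my_star_star {X : Type*} [InvBEAlgebra X] (x : X) : star (star x) = x :=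
  InvBEAlgebra.involutive x

lemma my_contr {X : Type*} [InvBEAlgebra X] (u v : X) :
    imp u v = imp (star v) (star u) := by
  conv_lhs => rw [← InvBEAlgebra.involutive v]
  rw [InvBEAlgebra.exchange]; rfl

theorem stmt2 {X : Type*} [InvBEAlgebra X] (x y : X) :
    imp (star (imp (star x) y)) (imp (star x) y) =
      imp (star (imp (star x) x)) (imp (star y) y) := by
  have hc : imp (star x) y = imp (star y) x := by
    rw [my_contr (star x) y, my_star_star]
  calc imp (star (imp (star x) y)) (imp (star x) y)
      = imp (star x) (imp (star (imp (star x) y)) y) := by rw [InvBEAlgebra.exchange]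
    _ = imp (star x) (imp (star y) (star (star (imp (star x) y)))) := by
          rw [← my_contr]
    _ = imp (star x) (imp (star y) (imp (star y) x)) := by rw [my_star_star, hc]
    _ = imp (star y) (imp (star y) (imp (star x) x)) := by
          rw [InvBEAlgebra.exchange (star x), InvBEAlgebra.exchange (star x)]
    _ = imp (star y) (imp (star y) (star (star (imp (star x) x)))) := by
          rw [my_star_star]
    _ = imp (star y) (imp (star (imp (star x) x)) y) := by rw [← my_contr]
    _ = imp (star (imp (star x) x)) (imp (star y) y) := by rw [InvBEAlgebra.exchange]
end

section
/- In an involutive BE algebra, with x ⊓ y := ((x* → y*) → y*)*, for all x, y, z: (x ⊓ (y ⊓ z))* = ((z → x) ⊓ (z → y)) → z*. -/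
open InvBEAlgebra

lemma ss {X : Type*} [InvBEAlgebra X] (a : X) : InvBEAlgebra.star (InvBEAlgebra.star a) = a :=
  InvBEAlgebra.involutive a

lemma contrap {X : Type*} [InvBEAlgebra X] (a b : X) :
    imp (InvBEAlgebra.star a) (InvBEAlgebra.star b) = imp b a := by
  unfold InvBEAlgebra.star
  rw [InvBEAlgebra.exchange, InvBEAlgebra.involutive]

theorem stmt3 {X : Type*} [InvBEAlgebra X] (x y z : X) :
    star (inf x (inf y z)) = imp (inf (imp z x) (imp z y)) (star z) := by
  have e := InvBEAlgebra.exchange (X := X)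
  -- LHS computation
  have hW : star (inf y z) = imp (imp z y) (star z) := by
    rw [inf, ss, contrap]
  have hL : star (inf x (inf y z)) =
      imp (imp (imp z y) (imp z x)) (imp (imp z y) (star z)) := by
    rw [inf, ss, hW, e (star x) (imp z y) (star z), contrap]
  -- RHS computation
  have hR : imp (inf (imp z x) (imp z y)) (star z) =
      imp (imp (imp z y) (imp z x)) (imp z (star (imp z y))) := by
    rw [inf, contrap, contrap, e z]
  have hz : imp z (star (imp z y)) = imp (imp z y) (star z) := by
    unfold InvBEAlgebra.star; rw [e]
  rw [hL, hR, hz]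
end

section
/- In an involutive BE algebra, define x ⊓ y = ((x* → y*) → y*)* and x ≤_Q y iff x = x ⊓ y. Then the cancellation law holds: if x ≤_Q z, y ≤_Q z and z → x = z → y, then x = y. -/
open InvBEAlgebra

theorem stmt4 {X : Type*} [InvBEAlgebra X] (x y z : X)
    (hx : leQ x z) (hy : leQ y z) (h : imp z x = imp z y) : x = y := by
  have contra : ∀ a b : X, imp a b = imp (InvBEAlgebra.star b) (InvBEAlgebra.star a) := by
    intro a b
    have : imp a b = imp a (imp (imp b 0) 0) := by rw [involutive]
    rw [this, exchange]
    rfl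
  have key : ∀ a : X, leQ a z →
      InvBEAlgebra.star a =
        imp (imp (InvBEAlgebra.star a) (InvBEAlgebra.star z)) (InvBEAlgebra.star z) := by
    intro a ha
    conv_lhs => rw [ha]
    simp only [inf, InvBEAlgebra.star]
    exact involutive _
  have hx' := key x hx
  have hy' := key y hy
  have h' : imp (InvBEAlgebra.star x) (InvBEAlgebra.star z) =
      imp (InvBEAlgebra.star y) (InvBEAlgebra.star z) := by
    rw [← contra, ← contra]; exact h
  have hs : InvBEAlgebra.star x = InvBEAlgebra.star y := by rw [hx', hy', h']
  have h2 := congrArg (fun t => imp t 0) hs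
  simp only [InvBEAlgebra.star] at h2
  rw [involutive, involutive] at h2
  exact h2
end

section
/- In an involutive BE algebra, with x ⊙ y := (x → y*)* and x ⊓ y := ((x* → y*) → y*)*, one has x ⊓ y = y ⊙ (y → x) for all x, y. -/
open InvBEAlgebra

theorem stmt5 {X : Type*} [InvBEAlgebra X] (x y : X) :
    inf x y = odot y (imp y x) := by
  unfold inf odot InvBEAlgebra.star
  have h1 : imp (imp x 0) (imp y 0) = imp y x := by
    rw [InvBEAlgebra.exchange, InvBEAlgebra.involutive]
  rw [h1, InvBEAlgebra.exchange y]
end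

section
/- In a quantum-Wajsberg algebra, the relation ≤_Q (defined by x ≤_Q y iff x = x ⊓ y) is antisymmetric in the following strong sense: if x ≤_Q y and y → x = 1, then x = y. -/
open InvBEAlgebra

theorem stmt6 {X : Type*} [QWAlgebra X] (x y : X)
    (h1 : leQ x y) (h2 : imp y x = 1) : x = y := by
  have key : imp (InvBEAlgebra.star x) (InvBEAlgebra.star y) = imp y x := by
    unfold InvBEAlgebra.star; rw [InvBEAlgebra.exchange, InvBEAlgebra.involutive]
  have : inf x y = y := by
    unfold inf
    rw [key, h2, InvBEAlgebra.one_imp]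
    exact InvBEAlgebra.involutive y
  rw [h1, this]
end

section
/- In a quantum-Wajsberg algebra, x = y → x if and only if y = x → y. -/
open InvBEAlgebra


section Aux

variable {X : Type*} [InvBEAlgebra X]

open InvBEAlgebra

lemma sstar (x : X) : star (star x) = x := InvBEAlgebra.involutive x

lemma sone : (star (1 : X)) = (0 : X) := InvBEAlgebra.one_imp 0

lemma imp_zero (x : X) : imp x (0 : X) = star x := rfl

lemma contrap_s9 (x y : X) : imp (star y) (star x) = imp x y := by
  have : imp (star y) (imp x 0) = imp x (imp (star y) 0) :=
    InvBEAlgebra.exchange (star y) x 0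
  calc imp (star y) (star x) = imp x (star (star y)) := this
    _ = imp x y := by rw [sstar]

lemma one_inf (x : X) : inf (1 : X) x = x := by
  unfold inf
  rw [sone, InvBEAlgebra.zero_imp, InvBEAlgebra.one_imp, sstar]

lemma inf_one (x : X) : inf x (1 : X) = x := by
  unfold inf
  rw [sone, imp_zero, imp_zero, sstar, sstar]

lemma zero_inf (x : X) : inf (0 : X) x = (0 : X) := by
  unfold inf
  have h0 : star (0 : X) = (1 : X) := InvBEAlgebra.zero_imp 0
  rw [h0, InvBEAlgebra.one_imp, InvBEAlgebra.imp_self]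
  exact sone

end Aux

section Aux2

variable {X : Type*} [QWAlgebra X]

open InvBEAlgebra

/-- QW with z := 1 : `x → ((x ⊓ y) ⊓ x) = x → y`. -/
lemma qwA (x y : X) : imp x (inf (inf x y) x) = imp x y := by
  have h := QWAlgebra.qw x y (1 : X)
  rwa [one_inf, InvBEAlgebra.imp_one, inf_one] at h

lemma key (x y : X) (h : x = imp y x) : y = imp x y := by
  have hyx : inf (star y) (star x) = (0 : X) := by
    unfold inf
    rw [sstar, sstar, ← h, InvBEAlgebra.imp_self]
    exact sone
  have hA := qwA (star y) (star x)
  rw [hyx, zero_inf, imp_zero, sstar, contrap_s9] at hA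
  exact hA

end Aux2

theorem stmt9 {X : Type*} [QWAlgebra X] (x y : X) :
    x = imp y x ↔ y = imp x y :=
  ⟨key x y, key y x⟩
end

section
/- In a quantum-Wajsberg algebra, if x C y (i.e., x ⊓ y = y ⊓ x), then x ⊔ y = y ⊔ x, where x ⊔ y = (x → y) → y. -/
open InvBEAlgebra

section Aux
variable {X : Type*} [InvBEAlgebra X]

lemma my_star_star_s12 (x : X) : InvBEAlgebra.star (InvBEAlgebra.star x) = x := InvBEAlgebra.involutive x

lemma my_star_inj {a b : X} (h : InvBEAlgebra.star a = InvBEAlgebra.star b) : a = b := by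
  have := congrArg InvBEAlgebra.star h
  rwa [my_star_star_s12, my_star_star_s12] at this

lemma my_star_one : (InvBEAlgebra.star (1 : X)) = 0 := InvBEAlgebra.one_imp 0

lemma my_star_zero : (InvBEAlgebra.star (0 : X)) = 1 := InvBEAlgebra.imp_self 0

lemma my_imp_star_comm (a b : X) : InvBEAlgebra.imp a (InvBEAlgebra.star b) = InvBEAlgebra.imp b (InvBEAlgebra.star a) :=
  InvBEAlgebra.exchange a b 0

lemma my_contrapos (a b : X) : InvBEAlgebra.imp a b = InvBEAlgebra.imp (InvBEAlgebra.star b) (InvBEAlgebra.star a) := by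
  conv_lhs => rw [← my_star_star_s12 b]
  exact my_imp_star_comm a (InvBEAlgebra.star b)

lemma my_inf_zero (x : X) : InvBEAlgebra.inf x 0 = 0 := by
  unfold InvBEAlgebra.inf
  rw [my_star_zero, InvBEAlgebra.imp_one, my_star_one]

lemma my_zero_inf (x : X) : InvBEAlgebra.inf 0 x = 0 := by
  unfold InvBEAlgebra.inf
  rw [my_star_zero, InvBEAlgebra.one_imp, InvBEAlgebra.imp_self, my_star_one]

end Aux

/-- Known lemma: (x → y) → (y ⊓ x) = x. -/
lemma keyK {X : Type*} [QWAlgebra X] (x y : X) :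
    InvBEAlgebra.imp (InvBEAlgebra.imp x y) (InvBEAlgebra.inf y x) = x := by
  have hq := QWAlgebra.qw x 0 y
  rw [my_inf_zero, my_zero_inf] at hq
  -- hq : InvBEAlgebra.imp x 0 = InvBEAlgebra.inf (InvBEAlgebra.imp x 0) (InvBEAlgebra.imp x y)
  have hq' : InvBEAlgebra.star x = InvBEAlgebra.inf (InvBEAlgebra.star x) (InvBEAlgebra.imp x y) := hq
  unfold InvBEAlgebra.inf at hq'
  rw [my_star_star_s12] at hq'
  have hx : x = InvBEAlgebra.imp (InvBEAlgebra.imp x (InvBEAlgebra.star (InvBEAlgebra.imp x y))) (InvBEAlgebra.star (InvBEAlgebra.imp x y)) := my_star_inj hq'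
  have h2 : InvBEAlgebra.imp x (InvBEAlgebra.star (InvBEAlgebra.imp x y)) = InvBEAlgebra.imp (InvBEAlgebra.imp x y) (InvBEAlgebra.star x) := my_imp_star_comm x (InvBEAlgebra.imp x y)
  rw [h2] at hx
  -- hx : x = InvBEAlgebra.imp (InvBEAlgebra.imp (InvBEAlgebra.imp x y) (InvBEAlgebra.star x)) (InvBEAlgebra.star (InvBEAlgebra.imp x y))
  have hinf : InvBEAlgebra.inf y x = InvBEAlgebra.star (InvBEAlgebra.imp (InvBEAlgebra.imp x y) (InvBEAlgebra.star x)) := by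
    unfold InvBEAlgebra.inf
    rw [← my_contrapos x y]
  rw [hinf, my_imp_star_comm]
  exact hx.symm

theorem stmt12 {X : Type*} [QWAlgebra X] (x y : X) (h : inf x y = inf y x) :
    sup x y = sup y x := by
  have kxy : InvBEAlgebra.imp (InvBEAlgebra.imp x y) (InvBEAlgebra.inf y x) = x := keyK x y
  have kyx : InvBEAlgebra.imp (InvBEAlgebra.imp y x) (InvBEAlgebra.inf x y) = y := keyK y x
  unfold InvBEAlgebra.sup
  calc InvBEAlgebra.imp (InvBEAlgebra.imp x y) y
      = InvBEAlgebra.imp (InvBEAlgebra.imp x y) (InvBEAlgebra.imp (InvBEAlgebra.imp y x) (InvBEAlgebra.inf x y)) := by rw [kyx]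
    _ = InvBEAlgebra.imp (InvBEAlgebra.imp y x) (InvBEAlgebra.imp (InvBEAlgebra.imp x y) (InvBEAlgebra.inf x y)) := InvBEAlgebra.exchange _ _ _
    _ = InvBEAlgebra.imp (InvBEAlgebra.imp y x) x := by rw [h, kxy]
end

section
/- In a quantum-Wajsberg algebra, if x C y then x* C y*, where x C y means x ⊓ y = y ⊓ x. -/
open InvBEAlgebra

section Aux

variable {X : Type*} [InvBEAlgebra X]

lemma aux_star_star (a : X) : star (star a) = a := InvBEAlgebra.involutive a

lemma aux_star_inj {a b : X} (h : star a = star b) : a = b := by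
  have := congrArg InvBEAlgebra.star h
  rwa [aux_star_star, aux_star_star] at this

lemma aux_star_one : (star (1 : X)) = 0 := by
  simp only [InvBEAlgebra.star, InvBEAlgebra.one_imp]

lemma aux_star_zero : (star (0 : X)) = 1 := by
  simp only [InvBEAlgebra.star, InvBEAlgebra.zero_imp]

lemma aux_contrap (a b : X) : imp (star a) (star b) = imp b a := by
  simp only [InvBEAlgebra.star]
  rw [InvBEAlgebra.exchange, InvBEAlgebra.involutive]

lemma aux_inf_zero (a : X) : inf a (0 : X) = 0 := by
  simp only [inf, InvBEAlgebra.star, InvBEAlgebra.zero_imp, InvBEAlgebra.imp_one, InvBEAlgebra.imp_self, InvBEAlgebra.one_imp]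

lemma aux_zero_inf (a : X) : inf (0 : X) a = 0 := by
  simp only [inf, InvBEAlgebra.star, InvBEAlgebra.zero_imp, InvBEAlgebra.imp_one, InvBEAlgebra.one_imp]
  rw [InvBEAlgebra.imp_self, InvBEAlgebra.one_imp]

end Aux

section QWAux

variable {X : Type*} [QWAlgebra X]

/-- Key consequence of the QW axiom with y := 0 : `x* ⊓ (x → y) = x*`. -/
lemma aux_U (x y : X) : inf (star x) (imp x y) = star x := by
  have h := QWAlgebra.qw x 0 y
  rw [aux_inf_zero, aux_zero_inf] at h
  exact h.symm

/-- Rewritten form: `(x → (x→y)*) → (x→y)* = x`. -/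
lemma aux_U' (x y : X) :
    imp (imp x (star (imp x y))) (star (imp x y)) = x := by
  have h := aux_U x y
  simp only [inf, aux_star_star] at h
  exact aux_star_inj h

/-- `(y→x) → (x ⊓ y) = y`. -/
lemma aux_V (x y : X) : imp (imp y x) (inf x y) = y := by
  have hc : imp (star x) (star y) = imp y x := aux_contrap x y
  have h1 : inf x y = star (imp (imp y x) (star y)) := by
    rw [inf, hc]
  rw [h1]
  have h2 : imp (imp y x) (star y) = imp y (star (imp y x)) := by
    simp only [InvBEAlgebra.star]; rw [InvBEAlgebra.exchange]
  rw [h2]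
  have h3 : imp (imp y x) (star (imp y (star (imp y x)))) =
      imp (imp y (star (imp y x))) (star (imp y x)) := by
    simp only [InvBEAlgebra.star]; rw [InvBEAlgebra.exchange]
  rw [h3]
  exact aux_U' y x

lemma aux_sup_comm (x y : X) (h : inf x y = inf y x) : sup x y = sup y x := by
  have key : imp (imp x y) y = imp (imp y x) x := by
    calc imp (imp x y) y
        = imp (imp x y) (imp (imp y x) (inf x y)) := by rw [aux_V x y]
      _ = imp (imp y x) (imp (imp x y) (inf x y)) := by rw [InvBEAlgebra.exchange]
      _ = imp (imp y x) (imp (imp x y) (inf y x)) := by rw [h]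
      _ = imp (imp y x) x := by rw [aux_V y x]
  simpa only [sup] using key

end QWAux

theorem stmt13 {X : Type*} [QWAlgebra X] (x y : X) (h : inf x y = inf y x) :
    inf (star x) (star y) = inf (star y) (star x) := by
  have hx : inf (star x) (star y) = star (sup x y) := by
    simp only [inf, sup, aux_star_star]
  have hy : inf (star y) (star x) = star (sup y x) := by
    simp only [inf, sup, aux_star_star]
  rw [hx, hy, aux_sup_comm x y h]
end
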